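/- arXiv:1608.08551 — 3 statements merged into one kernel-verified Lean document; each statement's English description precedes it below -/
import Mathlib

section
/- Let e ≥ 1 and Δ be integers with 1 ≤ Δ < 2^e, and set m = 2^e + Δ. If t is an integer with 2Δ + 1 ≤ t ≤ 2^e such that C(t−Δ−1, Δ) is odd, and A = 2^{⌊log₂(2Δ)⌋}, then C(2m−t, m) + C(2m−A−t, m−t) is odd. -/
/-!
By Lucas's theorem modulo 2, `C(a + b, a)` is odd exactly when `a` and `b` have no binary digit
in common. Write `t = 2Δ + c + 1`; the hypothesis says that `Δ` and `c` are digit-disjoint, so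
`Δ + c = Δ ||| c`, and `m - t = 2^e - 1 - (Δ + c)` is the `e`-digit complement of `Δ ||| c`,
which is disjoint from `m = 2^e + Δ`: the first term is odd. The numbers `m - t` and `m - A` are
both below `2^e`, but since `A ≤ 2Δ` their sum `2m - A - t` is at least `2^e`, so adding them
carries and the second term is even.
-/

namespace Nat

theorem bit_add_bit (x y : Bool) (a b : ℕ) :
    bit x a + bit y b = bit (x ^^ y) (a + b + (x && y).toNat) := by
  cases x <;> cases y <;> simp [bit_val] <;> omega

theorem add_eq_or_of_and_eq_zero {a b : ℕ} (h : a &&& b = 0) : a + b = a ||| b := by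
  induction a using binaryRec generalizing b with
  | zero => simp
  | bit x a ih =>
    obtain ⟨y, b, rfl⟩ : ∃ y b', b = bit y b' := ⟨_, _, (bit_bodd_div2 b).symm⟩
    rw [land_bit, bit_eq_zero_iff] at h
    rw [bit_add_bit, lor_bit, h.2, ← ih h.1]
    cases x <;> cases y <;> simp_all

theorem odd_choose_add_iff (a b : ℕ) : Odd ((a + b).choose a) ↔ a &&& b = 0 := by
  induction a using binaryRec generalizing b with
  | zero => simp
  | bit x a ih =>
    obtain ⟨y, b, rfl⟩ : ∃ y b', b = bit y b' := ⟨_, _, (bit_bodd_div2 b).symm⟩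
    rw [Nat.odd_iff, Choose.choose_modEq_choose_mod_mul_choose_div_nat (p := 2), bit_add_bit,
      bit_div_two, bit_mod_two, bit_div_two, bit_mod_two, land_bit, bit_eq_zero_iff, ← ih,
      Nat.odd_iff]
    cases x <;> cases y <;> simp

theorem two_pow_add_and_two_pow_sub_succ_eq_zero {e a c : ℕ} (hac : a &&& c = 0)
    (h : a + c < 2 ^ e) : (2 ^ e + a) &&& (2 ^ e - (a + c + 1)) = 0 := by
  have ha : a < 2 ^ e := by omega
  rw [add_eq_or_of_and_eq_zero hac] at h ⊢
  rw [← mul_one (2 ^ e), two_pow_add_eq_or_of_lt ha, mul_one]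
  apply zero_of_testBit_eq_false
  intro i
  rw [testBit_land, testBit_lor, testBit_two_pow, testBit_two_pow_sub_succ h, testBit_lor]
  by_cases hi : i < e
  · cases a.testBit i <;> simp [hi.ne']
  · simp [hi, testBit_lt_two_pow (ha.trans_le (pow_le_pow_right₀ one_le_two (not_lt.mp hi)))]

theorem and_ne_zero_of_two_pow_le_add {x y n : ℕ} (hx : x < 2 ^ n) (hy : y < 2 ^ n)
    (h : 2 ^ n ≤ x + y) : x &&& y ≠ 0 := fun hxy => by
  have := or_lt_two_pow hx hy
  rw [← add_eq_or_of_and_eq_zero hxy] at this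
  omega

end Nat

theorem stmt_6_general (e Δ m t A : ℕ) (hΔ1 : 1 ≤ Δ)
    (hm : m = 2 ^ e + Δ) (ht1 : 2 * Δ + 1 ≤ t) (ht2 : t ≤ 2 ^ e)
    (hodd : Odd (Nat.choose (t - Δ - 1) Δ)) (hA : A = 2 ^ Nat.log 2 (2 * Δ)) :
    Odd (Nat.choose (2 * m - t) m + Nat.choose (2 * m - A - t) (m - t)) := by
  obtain ⟨c, hc⟩ : ∃ c, t = 2 * Δ + c + 1 := ⟨t - 2 * Δ - 1, by omega⟩
  have hΔc : Δ &&& c = 0 := by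
    rw [← Nat.odd_choose_add_iff, show Δ + c = t - Δ - 1 by omega]
    exact hodd
  have hΔA : Δ < A := by
    have := Nat.lt_pow_succ_log_self one_lt_two (2 * Δ)
    rw [pow_succ, ← hA] at this
    omega
  have hA2Δ : A ≤ 2 * Δ := hA ▸ Nat.pow_log_le_self 2 (by omega)
  have hfirst : Odd ((2 * m - t).choose m) := by
    rw [show 2 * m - t = m + (m - t) by omega, Nat.odd_choose_add_iff,
      show m - t = 2 ^ e - (Δ + c + 1) by omega, hm]
    exact Nat.two_pow_add_and_two_pow_sub_succ_eq_zero hΔc (by omega)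
  have hsecond : Even ((2 * m - A - t).choose (m - t)) := by
    rw [← Nat.not_odd_iff_even, show 2 * m - A - t = (m - t) + (m - A) by omega,
      Nat.odd_choose_add_iff]
    exact Nat.and_ne_zero_of_two_pow_le_add (n := e) (by omega) (by omega) (by omega)
  exact hfirst.add_even hsecond

/-- Proposition 2.5(2c): with `m = 2^e + Δ`, `1 ≤ Δ < 2^e`, `2Δ+1 ≤ t ≤ 2^e`,
`C(t-Δ-1, Δ)` odd, and `A = 2^{⌊log₂(2Δ)⌋}`, the sum `C(2m-t, m) + C(2m-A-t, m-t)`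
is odd. -/
theorem stmt_6 (e Δ m t A : ℕ) (he : 1 ≤ e) (hΔ1 : 1 ≤ Δ) (hΔ2 : Δ < 2 ^ e)
    (hm : m = 2 ^ e + Δ) (ht1 : 2 * Δ + 1 ≤ t) (ht2 : t ≤ 2 ^ e)
    (hodd : Odd (Nat.choose (t - Δ - 1) Δ)) (hA : A = 2 ^ Nat.log 2 (2 * Δ)) :
    Odd (Nat.choose (2 * m - t) m + Nat.choose (2 * m - A - t) (m - t)) :=
  stmt_6_general e Δ m t A hΔ1 hm ht1 ht2 hodd hA
end

section
/- For every positive integer m, the binomial coefficient C(2m−1, m) is odd if and only if m is a power of 2. -/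
private lemma lucas2 (n k : ℕ) :
    Nat.choose n k % 2 = (Nat.choose (n % 2) (k % 2) * Nat.choose (n / 2) (k / 2)) % 2 := by
  haveI : Fact (Nat.Prime 2) := ⟨Nat.prime_two⟩
  exact Choose.choose_modEq_choose_mod_mul_choose_div_nat

/-- For every positive integer `m`, the binomial coefficient `C(2m-1, m)` is odd
if and only if `m` is a power of 2. -/
theorem stmt_9 (m : ℕ) (hm : 0 < m) :
    Odd (Nat.choose (2 * m - 1) m) ↔ ∃ e : ℕ, m = 2 ^ e := by
  induction m using Nat.strong_induction_on with
  | _ m ih =>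
  rcases Nat.even_or_odd m with ⟨t, ht⟩ | ⟨t, ht⟩
  · -- m = 2t, t > 0
    have ht' : m = 2 * t := by omega
    have htpos : 0 < t := by omega
    have key : Nat.choose (2 * m - 1) m % 2 = Nat.choose (2 * t - 1) t % 2 := by
      have := lucas2 (2 * m - 1) m
      have h1 : (2 * m - 1) % 2 = 1 := by omega
      have h2 : m % 2 = 0 := by omega
      have h3 : (2 * m - 1) / 2 = 2 * t - 1 := by omega
      have h4 : m / 2 = t := by omega
      rw [h1, h2, h3, h4] at this
      simpa using this
    have hOdd : Odd (Nat.choose (2 * m - 1) m) ↔ Odd (Nat.choose (2 * t - 1) t) := by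
      rw [Nat.odd_iff, Nat.odd_iff, key]
    rw [hOdd, ih t (by omega) htpos]
    constructor
    · rintro ⟨e, rfl⟩; exact ⟨e + 1, by rw [ht']; ring⟩
    · rintro ⟨e, he⟩
      rcases e with _ | e
      · omega
      · exact ⟨e, by have := pow_succ 2 e; omega⟩
  · -- m = 2t + 1
    rcases Nat.eq_or_lt_of_le hm with h1 | h1
    · refine iff_of_true ?_ ⟨0, by omega⟩
      rw [← h1]; simp
    -- m odd, m > 1, so t ≥ 1
    have htpos : 0 < t := by omega
    have key : Nat.choose (2 * m - 1) m % 2 = Nat.choose (2 * t) t % 2 := by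
      have := lucas2 (2 * m - 1) m
      have h1 : (2 * m - 1) % 2 = 1 := by omega
      have h2 : m % 2 = 1 := by omega
      have h3 : (2 * m - 1) / 2 = 2 * t := by omega
      have h4 : m / 2 = t := by omega
      rw [h1, h2, h3, h4] at this
      simpa using this
    have heven : Nat.choose (2 * t) t % 2 = 0 := by
      have := Nat.two_dvd_centralBinom_of_one_le htpos
      rw [Nat.centralBinom_eq_two_mul_choose] at this
      omega
    refine iff_of_false ?_ ?_
    · rw [Nat.odd_iff, key, heven]; simp
    · rintro ⟨e, he⟩
      rcases e with _ | e
      · omega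
      · have : 2 ∣ 2 ^ (e + 1) := dvd_pow_self 2 (Nat.succ_ne_zero e)
        omega
end

section
/- Let k ≥ 1 and let a = (a_1,…,a_k) be a k-tuple of positive integers. Then Φ(a, I) is even for every I ∈ {0,1}^k with ε_1 + ⋯ + ε_k < k (that is, for every 0/1 vector I other than (1,…,1)) if and only if a_i ≡ 1 (mod 2^{⌊log₂(2i)⌋}) for every 1 ≤ i ≤ k. -/
/-! Since `C(a + b - 2, b)` is the multiset coefficient `((a - 1 multichoose b))`, Lucas' theorem
shows that `((D multichoose b))` is even for all `1 ≤ b ≤ r` iff `2 ^ lg(2r) ∣ D`. The condition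
`B + I ∈ 𝒮_k` forces `b_i ≤ i`, so under the congruences every term with `B ≠ 0` is even, while
`B = 0` only occurs for `I = (1,…,1)`.

Conversely, assume the congruences below `r` and let `I` vanish exactly on `m ≤ r` consecutive
positions ending at `r` or at `r + 1`. Modulo 2 only the `B` supported on `[r, k]` survive, and the
Vandermonde identity for multiset coefficients (coefficients of `∏ (1 - X)^{-(a_i - 1)}`)
evaluates `Φ(a, I)` to `((Σ_{i ≥ r} (a_i - 1) multichoose m))`, plus `((a_r - 1 multichoose m))`
when the block ends at `r + 1`. Comparing the two choices of `I` makes `((a_r - 1 multichoose m))` even for all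
`1 ≤ m ≤ r`. -/

/-- `Phi k a I` is the sum `Σ_B ∏_{i=1}^k C(a_i + b_i - 2, b_i)` over all `k`-tuples
`B = (b_1,…,b_k)` of nonnegative integers such that `B + I ∈ 𝒮_k` (i.e. the sum of the
first `j` entries of `B + I` is at most `j` for each `1 ≤ j ≤ k`) and
`(b_1+ε_1) + ⋯ + (b_k+ε_k) = k`.  Sequences are 1-indexed: the `i`-th entry of `a` is
`a i` for `1 ≤ i ≤ k`.  The top entry `a_i + b_i - 2` uses truncated subtraction. -/
def Phi (k : ℕ) (a I : ℕ → ℕ) : ℕ :=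
  ∑ B ∈ (Fintype.piFinset fun _ : Fin k => Finset.range (k + 1)) |>.filter
      (fun B =>
        (∀ j : Fin k,
          (∑ i ∈ Finset.univ.filter (fun i : Fin k => i ≤ j), (B i + I (i.1 + 1)))
            ≤ j.1 + 1) ∧
        (∑ i : Fin k, (B i + I (i.1 + 1))) = k),
    ∏ i : Fin k, Nat.choose (a (i.1 + 1) + B i - 2) (B i)

open Finset PowerSeries

namespace Nat

theorem multichoose_two_mul_of_odd (D : ℕ) {b : ℕ} (hb : Odd b) :
    (multichoose (2 * D) b : ZMod 2) = 0 := by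
  obtain ⟨c, rfl⟩ := hb
  rw [multichoose_eq, (ZMod.natCast_eq_natCast_iff _ _ _).mpr
      (Choose.choose_modEq_choose_mod_mul_choose_div_nat (p := 2)),
    show (2 * D + (2 * c + 1) - 1) % 2 = 0 by omega, show (2 * c + 1) % 2 = 1 by omega]
  simp

theorem multichoose_two_mul_two_mul (D b : ℕ) :
    (multichoose (2 * D) (2 * b) : ZMod 2) = multichoose D b := by
  rcases b.eq_zero_or_pos with rfl | hb
  · simp
  rw [multichoose_eq, multichoose_eq, (ZMod.natCast_eq_natCast_iff _ _ _).mpr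
      (Choose.choose_modEq_choose_mod_mul_choose_div_nat (p := 2)),
    show (2 * D + 2 * b - 1) % 2 = 1 by omega, show (2 * D + 2 * b - 1) / 2 = D + b - 1 by omega]
  simp

theorem multichoose_two_pow_mul (n D : ℕ) {b : ℕ} (hb0 : b ≠ 0) (hb : b < 2 ^ n) :
    (multichoose (2 ^ n * D) b : ZMod 2) = 0 := by
  induction n generalizing b with
  | zero => omega
  | succ n ih =>
    rw [pow_succ', mul_assoc]
    obtain ⟨c, rfl | rfl⟩ := b.even_or_odd'
    · rw [multichoose_two_mul_two_mul]
      exact ih (by omega) (by rw [pow_succ] at hb; omega)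
    · exact multichoose_two_mul_of_odd _ (odd_two_mul_add_one c)

theorem two_pow_dvd_of_multichoose_two_pow (n D : ℕ)
    (h : ∀ j < n, (multichoose D (2 ^ j) : ZMod 2) = 0) : 2 ^ n ∣ D := by
  induction n generalizing D with
  | zero => simp
  | succ n ih =>
    obtain ⟨D, rfl⟩ : 2 ∣ D := by
      simpa [ZMod.natCast_eq_zero_iff] using h 0 n.succ_pos
    rw [pow_succ']
    refine mul_dvd_mul_left 2 (ih D fun j hj => ?_)
    rw [← multichoose_two_mul_two_mul, ← pow_succ']
    exact h (j + 1) (by omega)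

theorem two_pow_log_dvd_iff_multichoose {r : ℕ} (hr : r ≠ 0) (D : ℕ) :
    2 ^ log 2 (2 * r) ∣ D ↔ ∀ b, b ≠ 0 → b ≤ r → (multichoose D b : ZMod 2) = 0 := by
  rw [mul_comm, log_mul_base one_lt_two hr]
  constructor
  · rintro ⟨D, rfl⟩ b hb0 hbr
    exact multichoose_two_pow_mul _ D hb0 (hbr.trans_lt (lt_pow_succ_log_self one_lt_two r))
  · refine fun h => two_pow_dvd_of_multichoose_two_pow _ D fun j hj => h _ (by positivity) ?_
    exact (pow_le_pow_right₀ one_le_two (by omega)).trans (pow_log_le_self 2 hr)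

theorem choose_add_sub_two_eq_multichoose {A : ℕ} (hA : 0 < A) (b : ℕ) :
    (A + b - 2).choose b = (A - 1).multichoose b := by
  rw [multichoose_eq, show A - 1 + b - 1 = A + b - 2 by omega]

theorem choose_add_sub_two_eq_zero_of_modEq {A t b : ℕ} (hA : 0 < A)
    (hmod : A ≡ 1 [MOD 2 ^ log 2 (2 * t)]) (hb0 : b ≠ 0) (hbt : b ≤ t) :
    ((A + b - 2).choose b : ZMod 2) = 0 := by
  rw [choose_add_sub_two_eq_multichoose hA]
  exact (two_pow_log_dvd_iff_multichoose (by omega) _).mp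
    ((modEq_iff_dvd' hA).mp hmod.symm) b hb0 hbt

theorem multichoose_zero_left_eq_zero {b : ℕ} (hb : b ≠ 0) : multichoose 0 b = 0 := by
  obtain ⟨b, rfl⟩ := exists_eq_succ_of_ne_zero hb
  exact multichoose_zero_succ b

end Nat

theorem PowerSeries.coeff_invOneSubPow (R : Type*) [CommRing R] (c n : ℕ) :
    coeff n (invOneSubPow R c : R⟦X⟧) = c.multichoose n := by
  cases c with
  | zero => cases n <;> simp [invOneSubPow_zero, coeff_one, Nat.multichoose_zero_succ]
  | succ c =>
    rw [invOneSubPow_val_succ_eq_mk_add_choose, coeff_mk, Nat.multichoose_eq,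
      show c + 1 + n - 1 = c + n by omega, Nat.choose_symm_add]

theorem PowerSeries.prod_invOneSubPow (R : Type*) [CommRing R] {ι : Type*} (s : Finset ι)
    (c : ι → ℕ) : ∏ i ∈ s, (invOneSubPow R (c i) : R⟦X⟧) = invOneSubPow R (∑ i ∈ s, c i) := by
  simp only [invOneSubPow_eq_inv_one_sub_pow, ← prod_pow_eq_pow_sum, Units.coe_prod]

theorem Nat.sum_piAntidiag_prod_multichoose {ι : Type*} [Fintype ι] [DecidableEq ι]
    (c : ι → ℕ) (m : ℕ) :
    ∑ B ∈ piAntidiag univ m, ∏ i, (c i).multichoose (B i) = (∑ i, c i).multichoose m := by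
  have h := coeff_prod (fun i => (invOneSubPow ℤ (c i) : ℤ⟦X⟧)) m univ
  simp only [prod_invOneSubPow, coeff_invOneSubPow, finsuppAntidiag, sum_map] at h
  rw [← sum_attach (piAntidiag univ m)]
  exact_mod_cast h.symm

namespace Finset

theorem piAntidiag_univ_eq_filter_piFinset {ι : Type*} [Fintype ι] [DecidableEq ι] {m N : ℕ}
    (h : m ≤ N) :
    piAntidiag univ m =
      (Fintype.piFinset fun _ : ι => range (N + 1)).filter (fun B => ∑ i, B i = m) := by
  ext B
  simp only [mem_piAntidiag, mem_filter, Fintype.mem_piFinset, mem_range, mem_univ,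
    implies_true, and_true]
  refine ⟨fun hB => ⟨fun i => ?_, hB⟩, And.right⟩
  have := single_le_sum (fun j _ => Nat.zero_le (B j)) (mem_univ i)
  rw [hB] at this
  omega

theorem sum_piAntidiag_univ_eq_sum_filter_lt_add {ι M : Type*} [Fintype ι] [DecidableEq ι]
    [AddCommMonoid M] (f : (ι → ℕ) → M) (i : ι) (m : ℕ) :
    ∑ B ∈ piAntidiag univ m, f B =
      ∑ B ∈ (piAntidiag univ m).filter (fun B => B i < m), f B + f (Pi.single i m) := by
  rw [← sum_filter_add_sum_filter_not _ (fun B => B i < m)]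
  congr 1
  convert sum_singleton f (Pi.single i m)
  ext B
  simp only [mem_filter, mem_piAntidiag, mem_univ, implies_true, and_true, not_lt,
    mem_singleton]
  constructor
  · rintro ⟨hsum, hle⟩
    have hi : B i = m :=
      le_antisymm (hsum ▸ single_le_sum (fun j _ => Nat.zero_le _) (mem_univ i)) hle
    have hrest : ∑ j ∈ univ.erase i, B j = 0 := by
      have := add_sum_erase univ B (mem_univ i)
      rw [hsum, hi] at this
      omega
    ext j
    by_cases hj : j = i
    · subst hj; simp [hi]
    · simp [hj, sum_eq_zero_iff.mp hrest j (mem_erase.mpr ⟨hj, mem_univ j⟩)]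
  · rintro rfl
    simp

theorem sum_range_add_one_eq_sum_Icc {M : Type*} [AddCommMonoid M] (f : ℕ → M) (n : ℕ) :
    ∑ i ∈ range n, f (i + 1) = ∑ v ∈ Icc 1 n, f v := by
  induction n with
  | zero => simp
  | succ n ih => rw [sum_range_succ, ih, sum_Icc_succ_top (by omega)]

end Finset

theorem Fin.sum_univ_val_add_one {M : Type*} [AddCommMonoid M] {k : ℕ} (f : ℕ → M) :
    ∑ i : Fin k, f (i + 1) = ∑ v ∈ Icc 1 k, f v := by
  rw [Fin.sum_univ_eq_sum_range (fun i => f (i + 1)), sum_range_add_one_eq_sum_Icc]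

theorem Fin.sum_filter_le_val_add_one {M : Type*} [AddCommMonoid M] {k : ℕ} (f : ℕ → M)
    (j : Fin k) : ∑ i ∈ univ.filter (· ≤ j), f (i.1 + 1) = ∑ v ∈ Icc 1 (j.1 + 1), f v := by
  rw [filter_ge_eq_Iic, ← sum_range_add_one_eq_sum_Icc, Nat.range_succ_eq_Iic,
    ← Fin.map_valEmbedding_Iic, sum_map]
  rfl

section Phi

variable {k : ℕ}

abbrev Admissible (k : ℕ) (I : ℕ → ℕ) (B : Fin k → ℕ) : Prop :=
  (∀ j : Fin k, ∑ i ∈ univ.filter (· ≤ j), (B i + I (i.1 + 1)) ≤ j.1 + 1) ∧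
    ∑ i, (B i + I (i.1 + 1)) = k

def phiIndex (k : ℕ) (I : ℕ → ℕ) : Finset (Fin k → ℕ) :=
  (Fintype.piFinset fun _ : Fin k => range (k + 1)).filter (Admissible k I)

theorem Phi_eq_sum_phiIndex (k : ℕ) (a I : ℕ → ℕ) :
    Phi k a I = ∑ B ∈ phiIndex k I, ∏ i : Fin k, (a (i.1 + 1) + B i - 2).choose (B i) := rfl

theorem Admissible.le {I : ℕ → ℕ} {B : Fin k → ℕ} (hB : Admissible k I B) (i : Fin k) :
    B i ≤ i.1 + 1 :=
  calc B i ≤ B i + I (i.1 + 1) := Nat.le_add_right _ _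
    _ ≤ ∑ x ∈ univ.filter (· ≤ i), (B x + I (x.1 + 1)) :=
      single_le_sum (f := fun x : Fin k => B x + I (x.1 + 1)) (fun _ _ => Nat.zero_le _)
        (by simp)
    _ ≤ i.1 + 1 := hB.1 i

theorem Admissible.choose_eq_zero {I a : ℕ → ℕ} {B : Fin k → ℕ} (hB : Admissible k I B)
    {i : Fin k} (ha : 0 < a (i.1 + 1))
    (hmod : a (i.1 + 1) ≡ 1 [MOD 2 ^ Nat.log 2 (2 * (i.1 + 1))]) (hBi : B i ≠ 0) :
    ((a (i.1 + 1) + B i - 2).choose (B i) : ZMod 2) = 0 :=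
  Nat.choose_add_sub_two_eq_zero_of_modEq ha hmod hBi (hB.le i)

theorem Phi_cast_eq_zero_of_modEq {a I : ℕ → ℕ} (ha : ∀ i ∈ Icc 1 k, 0 < a i)
    (hmod : ∀ i ∈ Icc 1 k, a i ≡ 1 [MOD 2 ^ Nat.log 2 (2 * i)]) (hI : ∑ v ∈ Icc 1 k, I v < k) :
    (Phi k a I : ZMod 2) = 0 := by
  rw [Phi_eq_sum_phiIndex]
  push_cast
  refine sum_eq_zero fun B hB => ?_
  have hB : Admissible k I B := (mem_filter.mp hB).2
  obtain ⟨i, hi⟩ : ∃ i, B i ≠ 0 := by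
    by_contra! h
    have := hB.2
    simp only [h, zero_add, Fin.sum_univ_val_add_one (f := I)] at this
    omega
  have hik : i.1 + 1 ∈ Icc 1 k := mem_Icc.mpr ⟨by omega, i.2⟩
  exact prod_eq_zero (mem_univ i) (hB.choose_eq_zero (ha _ hik) (hmod _ hik) hi)

def tailExp (a : ℕ → ℕ) (r₀ i : Fin k) : ℕ := if i < r₀ then 0 else a (i.1 + 1) - 1

theorem Admissible.choose_cast_eq_multichoose_tailExp {I a : ℕ → ℕ} {B : Fin k → ℕ}
    (hB : Admissible k I B) {r₀ : Fin k} (ha : ∀ i ∈ Icc 1 k, 0 < a i)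
    (hmod : ∀ i < r₀, a (i.1 + 1) ≡ 1 [MOD 2 ^ Nat.log 2 (2 * (i.1 + 1))]) (i : Fin k) :
    ((a (i.1 + 1) + B i - 2).choose (B i) : ZMod 2) = (tailExp a r₀ i).multichoose (B i) := by
  have hai : 0 < a (i.1 + 1) := ha _ (mem_Icc.mpr ⟨by omega, i.2⟩)
  by_cases hi : i < r₀
  · rcases eq_or_ne (B i) 0 with h | h
    · simp [h]
    · rw [tailExp, if_pos hi, Nat.multichoose_zero_left_eq_zero h,
        hB.choose_eq_zero hai (hmod i hi) h, Nat.cast_zero]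
  · rw [tailExp, if_neg hi, Nat.choose_add_sub_two_eq_multichoose hai]

theorem Phi_cast_eq_sum_multichoose_tailExp {a I : ℕ → ℕ} (ha : ∀ i ∈ Icc 1 k, 0 < a i)
    {r₀ : Fin k} (hmod : ∀ i < r₀, a (i.1 + 1) ≡ 1 [MOD 2 ^ Nat.log 2 (2 * (i.1 + 1))]) :
    (Phi k a I : ZMod 2) =
      ∑ B ∈ phiIndex k I, ∏ i, ((tailExp a r₀ i).multichoose (B i) : ZMod 2) := by
  rw [Phi_eq_sum_phiIndex]
  push_cast
  exact sum_congr rfl fun B hB => prod_congr rfl fun i _ =>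
    (mem_filter.mp hB).2.choose_cast_eq_multichoose_tailExp ha hmod i

def blockVec (s m v : ℕ) : ℕ := if s - m < v ∧ v ≤ s then 0 else 1

theorem sum_Icc_blockVec (s m l : ℕ) :
    ∑ v ∈ Icc 1 l, blockVec s m v = l - (min l s - min l (s - m)) := by
  induction l with
  | zero => simp
  | succ l ih =>
    rw [sum_Icc_succ_top (by omega), ih, blockVec]
    split_ifs <;> omega

theorem admissible_blockVec_iff {r₀ : Fin k} {e m : ℕ} (he : e ≤ 1) (hm0 : m ≠ 0)
    (hm : m ≤ r₀.1 + 1) (hs : r₀.1 + 1 + e ≤ k) {B : Fin k → ℕ} (hB : ∀ i < r₀, B i = 0) :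
    Admissible k (blockVec (r₀.1 + 1 + e) m) B ↔ ∑ i, B i = m ∧ B r₀ + e ≤ m := by
  have hlt : ∀ j < r₀, ∑ i ∈ univ.filter (· ≤ j), B i = 0 := fun j hj =>
    sum_eq_zero fun i hi => hB i (lt_of_le_of_lt (mem_filter.mp hi).2 hj)
  have heq : ∑ i ∈ univ.filter (· ≤ r₀), B i = B r₀ :=
    sum_eq_single_of_mem r₀ (by simp) fun i hi hne =>
      hB i (lt_of_le_of_ne (mem_filter.mp hi).2 hne)
  have hle : ∀ j, ∑ i ∈ univ.filter (· ≤ j), B i ≤ ∑ i, B i := fun j =>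
    sum_le_sum_of_subset (subset_univ _)
  simp only [Admissible, sum_add_distrib, Fin.sum_filter_le_val_add_one (f := blockVec _ m),
    Fin.sum_univ_val_add_one (f := blockVec _ m), sum_Icc_blockVec]
  constructor
  · rintro ⟨hpre, htot⟩
    have := hpre r₀
    rw [heq] at this
    omega
  · rintro ⟨hsum, hr⟩
    refine ⟨fun j => ?_, by omega⟩
    rcases lt_trichotomy j r₀ with h | rfl | h
    · rw [hlt j h]
      omega
    · rw [heq]
      omega
    · have := hle j
      rw [Fin.lt_def] at h
      omega

theorem Phi_blockVec_cast {a : ℕ → ℕ} (ha : ∀ i ∈ Icc 1 k, 0 < a i) {r₀ : Fin k}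
    (hmod : ∀ i < r₀, a (i.1 + 1) ≡ 1 [MOD 2 ^ Nat.log 2 (2 * (i.1 + 1))])
    {m : ℕ} (hm0 : m ≠ 0) (hm : m ≤ r₀.1 + 1)
    {e : ℕ} (he : e ≤ 1) (hs : r₀.1 + 1 + e ≤ k) :
    (Phi k a (blockVec (r₀.1 + 1 + e) m) : ZMod 2) =
      ∑ B ∈ (piAntidiag univ m).filter (fun B => B r₀ + e ≤ m),
        ∏ i, ((tailExp a r₀ i).multichoose (B i) : ZMod 2) := by
  rw [Phi_cast_eq_sum_multichoose_tailExp ha hmod, ← sum_filter_ne_zero,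
    ← sum_filter_ne_zero (s := (piAntidiag univ m).filter _)]
  congr 1
  ext B
  have hsupp : ∏ i, ((tailExp a r₀ i).multichoose (B i) : ZMod 2) ≠ 0 → ∀ i < r₀, B i = 0 :=
    fun hW i hi => by
      by_contra h
      refine hW (prod_eq_zero (mem_univ i) ?_)
      rw [tailExp, if_pos hi, Nat.multichoose_zero_left_eq_zero h, Nat.cast_zero]
  simp only [mem_filter, phiIndex, piAntidiag_univ_eq_filter_piFinset (N := k) (by omega : m ≤ k)]
  constructor
  · rintro ⟨⟨hpi, hB⟩, hW⟩
    obtain ⟨hsum, hr⟩ := (admissible_blockVec_iff he hm0 hm hs (hsupp hW)).mp hB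
    exact ⟨⟨⟨hpi, hsum⟩, hr⟩, hW⟩
  · rintro ⟨⟨⟨hpi, hsum⟩, hr⟩, hW⟩
    exact ⟨⟨hpi, (admissible_blockVec_iff he hm0 hm hs (hsupp hW)).mpr ⟨hsum, hr⟩⟩, hW⟩

theorem Phi_blockVec_self_cast {a : ℕ → ℕ} (ha : ∀ i ∈ Icc 1 k, 0 < a i) {r₀ : Fin k}
    (hmod : ∀ i < r₀, a (i.1 + 1) ≡ 1 [MOD 2 ^ Nat.log 2 (2 * (i.1 + 1))])
    {m : ℕ} (hm0 : m ≠ 0) (hm : m ≤ r₀.1 + 1) (hs : r₀.1 + 1 ≤ k) :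
    (Phi k a (blockVec (r₀.1 + 1) m) : ZMod 2) = (∑ i, tailExp a r₀ i).multichoose m := by
  have h := Phi_blockVec_cast ha hmod hm0 hm (e := 0) zero_le_one hs
  rw [add_zero, filter_true_of_mem fun B hB => ?_] at h
  · rw [h, ← Nat.sum_piAntidiag_prod_multichoose]
    push_cast
    rfl
  · rw [add_zero, ← (mem_piAntidiag.mp hB).1]
    exact single_le_sum (fun _ _ => Nat.zero_le _) (mem_univ r₀)

theorem Phi_blockVec_succ_cast {a : ℕ → ℕ} (ha : ∀ i ∈ Icc 1 k, 0 < a i) {r₀ : Fin k}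
    (hmod : ∀ i < r₀, a (i.1 + 1) ≡ 1 [MOD 2 ^ Nat.log 2 (2 * (i.1 + 1))])
    {m : ℕ} (hm0 : m ≠ 0) (hm : m ≤ r₀.1 + 1) (hs : r₀.1 + 2 ≤ k) :
    (Phi k a (blockVec (r₀.1 + 2) m) : ZMod 2) + (a (r₀.1 + 1) - 1).multichoose m =
      (∑ i, tailExp a r₀ i).multichoose m := by
  have hsingle :
      ∏ i, ((tailExp a r₀ i).multichoose (Pi.single (M := fun _ => ℕ) r₀ m i) : ZMod 2) =
        (a (r₀.1 + 1) - 1).multichoose m := by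
    rw [prod_eq_single r₀ (fun i _ hi => by simp [Pi.single_eq_of_ne hi]) (by simp),
      Pi.single_eq_same, tailExp, if_neg (lt_irrefl r₀)]
  rw [Phi_blockVec_cast ha hmod hm0 hm (e := 1) le_rfl hs, ← hsingle,
    ← Nat.sum_piAntidiag_prod_multichoose, Nat.cast_sum,
    sum_piAntidiag_univ_eq_sum_filter_lt_add _ r₀ m]
  push_cast
  -- `B r₀ + 1 ≤ m` is `B r₀ < m` by definition
  rfl

theorem modEq_of_forall_Phi_even {a : ℕ → ℕ} (ha : ∀ i ∈ Icc 1 k, 0 < a i) {r₀ : Fin k}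
    (hmod : ∀ i < r₀, a (i.1 + 1) ≡ 1 [MOD 2 ^ Nat.log 2 (2 * (i.1 + 1))])
    (hΦ : ∀ I : ℕ → ℕ, (∀ i ∈ Icc 1 k, I i ≤ 1) → ∑ i ∈ Icc 1 k, I i < k → Even (Phi k a I)) :
    a (r₀.1 + 1) ≡ 1 [MOD 2 ^ Nat.log 2 (2 * (r₀.1 + 1))] := by
  have hblock : ∀ s m, m ≠ 0 → m ≤ s → s ≤ k → (Phi k a (blockVec s m) : ZMod 2) = 0 :=
    fun s m hm0 hms hsk => ZMod.natCast_eq_zero_iff_even.mpr <|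
      hΦ _ (fun i _ => by unfold blockVec; split_ifs <;> omega)
        (by rw [sum_Icc_blockVec]; omega)
  have htail : ∀ m, m ≠ 0 → m ≤ r₀.1 + 1 →
      ((∑ i, tailExp a r₀ i).multichoose m : ZMod 2) = 0 := fun m hm0 hm =>
    (Phi_blockVec_self_cast ha hmod hm0 hm r₀.2).symm.trans (hblock _ m hm0 hm r₀.2)
  have hdvd : 2 ^ Nat.log 2 (2 * (r₀.1 + 1)) ∣ a (r₀.1 + 1) - 1 := by
    refine (Nat.two_pow_log_dvd_iff_multichoose (by omega) _).mpr fun m hm0 hm => ?_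
    by_cases hs : r₀.1 + 2 ≤ k
    · have h := Phi_blockVec_succ_cast ha hmod hm0 hm hs
      rwa [hblock _ m hm0 (by omega) hs, zero_add, htail m hm0 hm] at h
    · have hlast : ∑ i, tailExp a r₀ i = a (r₀.1 + 1) - 1 := by
        rw [sum_eq_single r₀ (fun i _ hi => ?_) (by simp), tailExp, if_neg (lt_irrefl r₀)]
        rw [tailExp, if_pos (lt_of_le_of_ne (Fin.le_def.mpr (by omega)) hi)]
      rw [← hlast]
      exact htail m hm0 hm
  exact ((Nat.modEq_iff_dvd' (ha _ (mem_Icc.mpr ⟨by omega, r₀.2⟩))).mpr hdvd).symm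

end Phi

theorem stmt_14_general (k : ℕ)
    (a : ℕ → ℕ) (ha : ∀ i ∈ Finset.Icc 1 k, 0 < a i) :
    (∀ I : ℕ → ℕ, (∀ i ∈ Finset.Icc 1 k, I i ≤ 1) →
      (∑ i ∈ Finset.Icc 1 k, I i) < k → Even (Phi k a I)) ↔
    (∀ i ∈ Finset.Icc 1 k, a i ≡ 1 [MOD 2 ^ Nat.log 2 (2 * i)]) := by
  refine ⟨fun hΦ => ?_, fun hmod I _ hI =>
    ZMod.natCast_eq_zero_iff_even.mp (Phi_cast_eq_zero_of_modEq ha hmod hI)⟩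
  have hfin : ∀ r₀ : Fin k, a (r₀.1 + 1) ≡ 1 [MOD 2 ^ Nat.log 2 (2 * (r₀.1 + 1))] := by
    intro r₀
    induction r₀ using WellFoundedLT.induction with
    | _ r₀ ih => exact modEq_of_forall_Phi_even ha ih hΦ
  intro i hi
  obtain ⟨hi1, hik⟩ := mem_Icc.mp hi
  simpa [Nat.sub_add_cancel hi1] using hfin ⟨i - 1, by omega⟩

/-- Lemma 4.9 (toplem): `Φ(a, I)` is even for every 0/1-vector `I` other than
`(1,…,1)` if and only if `a_i ≡ 1 (mod 2^{⌊log₂(2i)⌋})` for every `1 ≤ i ≤ k`. -/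
theorem stmt_14 (k : ℕ) (hk : 1 ≤ k)
    (a : ℕ → ℕ) (ha : ∀ i ∈ Finset.Icc 1 k, 0 < a i) :
    (∀ I : ℕ → ℕ, (∀ i ∈ Finset.Icc 1 k, I i ≤ 1) →
      (∑ i ∈ Finset.Icc 1 k, I i) < k → Even (Phi k a I)) ↔
    (∀ i ∈ Finset.Icc 1 k, a i ≡ 1 [MOD 2 ^ Nat.log 2 (2 * i)]) :=
  stmt_14_general k a ha
end
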